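/- arXiv:1701.07463 — 7 statements merged into one kernel-verified Lean document; each statement's English description precedes it below -/
import Mathlib

section
/- Let H be a finite simple graph possibly with loops, with adjacency matrix A(H) over GF(2) (where the diagonal entry at v is 1 iff v has a loop). If v is a looped vertex of H, and H|v denotes the graph obtained from the local complement H*v (which complements adjacency and loop-status within the closed neighborhood of v) by deleting the vertex v, then the nullity of A(H|v) equals the nullity of A(H); equivalently, the rank of A(H|v) equals the rank of A(H) minus 1. -/
open Matrix

variable {V : Type*} [Fintype V] [DecidableEq V]

/- A graph with loops (but no multiple edges) on vertex set `V` is encoded by its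
symmetric adjacency matrix over GF(2). -/

/-- The adjacency matrix of `H|v`: the Schur complement of `A` on the `1×1`
principal submatrix indexed by the looped vertex `v` (over GF(2), `+` is `−`),
i.e. the adjacency matrix of the graph obtained from the local complement `H*v`
by deleting all edges incident to `v` and then deleting `v`. -/
def schurC (A : Matrix V V (ZMod 2)) (v : V) :
    Matrix {x : V // x ≠ v} {x : V // x ≠ v} (ZMod 2) :=
  fun x y => A x.1 y.1 + A x.1 v * A v y.1

/-!
Reorder the vertices so that `v` comes last. Then `A = E * (S ⊕ [A v v]) * F` with `E`, `F`
unitriangular block matrices and `S` the Schur complement of the pivot `A v v`, so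
`rank A = rank S + 1`. Over GF(2) with `A v v = 1` the Schur complement is `schurC A v`.
-/

open Module

variable {K : Type*} [Field K]

theorem LinearMap.finrank_range_prodMap {M₁ M₂ M₃ M₄ : Type*} [AddCommGroup M₁]
    [AddCommGroup M₂] [AddCommGroup M₃] [AddCommGroup M₄] [Module K M₁] [Module K M₂]
    [Module K M₃] [Module K M₄] [FiniteDimensional K M₂] [FiniteDimensional K M₄]
    (f : M₁ →ₗ[K] M₂) (g : M₃ →ₗ[K] M₄) :
    finrank K (f.prodMap g).range = finrank K f.range + finrank K g.range := by
  have hrange : (f.prodMap g).range = (f.range.subtype.prodMap g.range.subtype).range := by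
    rw [range_prodMap, range_prodMap, Submodule.range_subtype, Submodule.range_subtype]
  rw [hrange, finrank_range_of_inj, finrank_prod]
  exact Prod.map_injective.mpr ⟨Subtype.val_injective, Subtype.val_injective⟩

namespace Matrix

variable {m n : Type*} [Fintype m] [Fintype n]

theorem rank_fromBlocks_zero₁₂_zero₂₁ (A : Matrix m m K) (D : Matrix n n K) :
    (fromBlocks A 0 0 D).rank = A.rank + D.rank := by
  let e := LinearEquiv.sumArrowLequivProdArrow m n K K
  have hconj : (fromBlocks A 0 0 D).mulVecLin =
      e.symm.toLinearMap ∘ₗ A.mulVecLin.prodMap D.mulVecLin ∘ₗ e.toLinearMap := by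
    refine LinearMap.ext fun x => funext fun i => ?_
    cases i <;> simp [e, fromBlocks_mulVec] <;> rfl
  rw [rank, hconj, LinearMap.range_comp, LinearMap.range_comp_of_range_eq_top _ e.range,
    LinearEquiv.finrank_map_eq, LinearMap.finrank_range_prodMap]
  rfl

theorem rank_fromBlocks_of_isUnit_det₂₂ [DecidableEq n] (A : Matrix m m K) (B : Matrix m n K)
    (C : Matrix n m K) (D : Matrix n n K) (hD : IsUnit D.det) :
    (fromBlocks A B C D).rank = (A - B * D⁻¹ * C).rank + Fintype.card n := by
  classical
  let := invertibleOfIsUnitDet D hD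
  rw [fromBlocks_eq_of_invertible₂₂, rank_mul_eq_left_of_isUnit_det,
    rank_mul_eq_right_of_isUnit_det, rank_fromBlocks_zero₁₂_zero₂₁,
    rank_of_isUnit D ((isUnit_iff_isUnit_det D).mpr hD), invOf_eq_nonsing_inv]
  · simp
  · simp

theorem rank_pivot_add_one (A : Matrix V V K) (v : V) (hv : A v v ≠ 0) :
    (of fun x y : {x // x ≠ v} => A x y - A x v * (A v v)⁻¹ * A v y).rank + 1 = A.rank := by
  let e : {x // x ≠ v} ⊕ PUnit.{1} ≃ V :=
    (Equiv.optionEquivSumPUnit _).symm.trans (Equiv.optionSubtypeNe v)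
  rw [← rank_submatrix A e e, ← fromBlocks_toBlocks (A.submatrix e e),
    rank_fromBlocks_of_isUnit_det₂₂]
  · rw [Fintype.card_unique]
    congr 2
    ext x y
    simp [e, toBlocks₁₁, toBlocks₁₂, toBlocks₂₁, toBlocks₂₂, mul_apply, Equiv.optionEquivSumPUnit]
  · simp [e, det_unique, toBlocks₂₂, Equiv.optionEquivSumPUnit, hv]

end Matrix

theorem nullity_schurC_eq_general (A : Matrix V V (ZMod 2)) (v : V)
    (hv : A v v = 1) :
    Fintype.card {x : V // x ≠ v} - (schurC A v).rank = Fintype.card V - A.rank ∧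
    (schurC A v).rank + 1 = A.rank := by
  have hschur : schurC A v = of fun x y : {x // x ≠ v} => A x y - A x v * (A v v)⁻¹ * A v y := by
    ext x y
    simp [schurC, hv, CharTwo.sub_eq_add]
  have hrank : (schurC A v).rank + 1 = A.rank :=
    hschur ▸ rank_pivot_add_one A v (by simp [hv])
  have hcard : Fintype.card V = Fintype.card {x : V // x ≠ v} + 1 := by
    rw [← Fintype.card_congr (Equiv.optionSubtypeNe v), Fintype.card_option]
  exact ⟨by omega, hrank⟩

/-- For a looped vertex `v` of a graph `H` (with loops allowed), the nullity of
`A(H|v)` equals the nullity of `A(H)`; equivalently `rank A(H|v) = rank A(H) − 1`. -/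
theorem nullity_schurC_eq (A : Matrix V V (ZMod 2)) (hA : A.IsSymm) (v : V)
    (hv : A v v = 1) :
    Fintype.card {x : V // x ≠ v} - (schurC A v).rank = Fintype.card V - A.rank ∧
    (schurC A v).rank + 1 = A.rank :=
  nullity_schurC_eq_general A v hv
end

section
/- Let H be a graph (loops allowed) with adjacency matrix A(H) over GF(2), and let φ = *_c v₁ *_c v₂ ⋯ *_c v_k be an lc-sequence for H of length k (the vertices v₁,…,v_k are mutually distinct and each successive operation is applicable, i.e., applied at a looped vertex of the current graph). Then Hφ has no edges (all vertices of Hφ are isolated) if and only if k = rank(A(H)) over GF(2). -/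
open Matrix

variable {V : Type*} [Fintype V] [DecidableEq V]

/-- The adjacency matrix of `H *_c v`: complement the induced subgraph on the
closed neighborhood of the looped vertex `v` (including loop statuses of the
neighbors of `v`) and remove all edges incident to `v`, including the loop at `v`. -/
def lccMat (A : Matrix V V (ZMod 2)) (v : V) : Matrix V V (ZMod 2) :=
  fun x y => if x = v ∨ y = v then 0 else A x y + A x v * A v y

/-- `IsLcSeq A σ` holds when the sequence of `*_c` operations at the vertices of `σ`
is applicable in order: each vertex is looped in the current graph. -/
def IsLcSeq (A : Matrix V V (ZMod 2)) : List V → Prop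
  | [] => True
  | v :: rest => A v v = 1 ∧ IsLcSeq (lccMat A v) rest

set_option linter.unusedSectionVars false

lemma lccMat_apply (A : Matrix V V (ZMod 2)) (v : V) (hv : A v v = 1) (x y : V) :
    lccMat A v x y = A x y + A x v * A v y := by
  unfold lccMat
  rcases eq_or_ne x v with rfl | hx
  · simp [hv, CharTwo.add_self_eq_zero]
  rcases eq_or_ne y v with rfl | hy
  · simp [hv, hx, CharTwo.add_self_eq_zero]
  · simp [hx, hy]

lemma lccMat_isSymm (A : Matrix V V (ZMod 2)) (hA : A.IsSymm) (v : V) :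
    (lccMat A v).IsSymm := by
  have hs : ∀ x y, A x y = A y x := fun x y => hA.apply y x
  ext x y
  show lccMat A v y x = lccMat A v x y
  unfold lccMat
  by_cases h : x = v ∨ y = v
  · rw [if_pos h.symm, if_pos h]
  · rw [if_neg (fun hc => h hc.symm), if_neg h, hs y x, hs y v, hs v x]
    ring

lemma rank_lccMat (A : Matrix V V (ZMod 2)) (hA : A.IsSymm) (v : V) (hv : A v v = 1) :
    A.rank = (lccMat A v).rank + 1 := by
  have hBapp := lccMat_apply A v hv
  set u : V → ZMod 2 := fun x => A x v with hu
  have key : ∀ w, lccMat A v *ᵥ w = A *ᵥ w + ((A *ᵥ w) v) • u := by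
    intro w
    funext x
    simp only [Matrix.mulVec, dotProduct, Pi.add_apply, Pi.smul_apply, smul_eq_mul]
    rw [mul_comm, Finset.mul_sum, ← Finset.sum_add_distrib]
    apply Finset.sum_congr rfl
    intro y _
    rw [hBapp x y, hu]
    ring
  have huA : u = A *ᵥ Pi.single v 1 := by
    funext x; rw [Matrix.mulVec_single]; simp [hu]
  have hurange : u ∈ LinearMap.range A.mulVecLin := ⟨Pi.single v 1, huA.symm⟩
  have hBrow : ∀ w, (lccMat A v *ᵥ w) v = 0 := by
    intro w
    simp only [Matrix.mulVec, dotProduct]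
    apply Finset.sum_eq_zero
    intro y _
    have : lccMat A v v y = 0 := by unfold lccMat; simp
    rw [this, zero_mul]
  have hunotin : u ∉ LinearMap.range (lccMat A v).mulVecLin := by
    rintro ⟨w, hw⟩
    have h1 := congrFun hw v
    rw [Matrix.mulVecLin_apply, hBrow w] at h1
    have h2 : (0 : ZMod 2) = 1 := by rw [h1]; simp [hu, hv]
    exact absurd h2 (by decide)
  have hune : u ≠ 0 := by
    intro h
    have := congrFun h v
    simp [hu, hv] at this
  have hrange : LinearMap.range A.mulVecLin
      = LinearMap.range (lccMat A v).mulVecLin ⊔ Submodule.span (ZMod 2) {u} := by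
    apply le_antisymm
    · rintro _ ⟨w, rfl⟩
      rw [Matrix.mulVecLin_apply]
      have h3 : A *ᵥ w = lccMat A v *ᵥ w + ((A *ᵥ w) v) • u := by
        rw [key w, add_assoc, ← add_smul, CharTwo.add_self_eq_zero, zero_smul, add_zero]
      rw [h3]
      exact Submodule.add_mem _
        (Submodule.mem_sup_left ⟨w, rfl⟩)
        (Submodule.mem_sup_right (Submodule.smul_mem _ _ (Submodule.mem_span_singleton_self u)))
    · rw [sup_le_iff]
      constructor
      · rintro _ ⟨w, rfl⟩
        rw [Matrix.mulVecLin_apply, key w]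
        exact Submodule.add_mem _ ⟨w, rfl⟩ (Submodule.smul_mem _ _ hurange)
      · rw [Submodule.span_le, Set.singleton_subset_iff]
        exact hurange
  have hdisj : Disjoint (LinearMap.range (lccMat A v).mulVecLin)
      (Submodule.span (ZMod 2) {u}) := by
    rw [disjoint_iff_inf_le]
    intro x hx
    rw [Submodule.mem_inf] at hx
    obtain ⟨hx1, hx2⟩ := hx
    rw [Submodule.mem_span_singleton] at hx2
    obtain ⟨c, rfl⟩ := hx2
    rcases eq_or_ne c 0 with rfl | hc
    · simp
    · exact absurd (by simpa [smul_smul, inv_mul_cancel₀ hc] using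
        Submodule.smul_mem _ c⁻¹ hx1 : u ∈ LinearMap.range (lccMat A v).mulVecLin) hunotin
  have hfin := Submodule.finrank_sup_add_finrank_inf_eq
    (LinearMap.range (lccMat A v).mulVecLin) (Submodule.span (ZMod 2) {u})
  rw [hdisj.eq_bot, finrank_bot, add_zero, finrank_span_singleton hune] at hfin
  rw [Matrix.rank, Matrix.rank, hrange, hfin]

lemma rank_foldl_lcc (σ : List V) : ∀ (A : Matrix V V (ZMod 2)), A.IsSymm → IsLcSeq A σ →
    A.rank = (σ.foldl lccMat A).rank + σ.length := by
  induction σ with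
  | nil => intro A _ _; simp
  | cons v rest ih =>
    intro A hA hlc
    obtain ⟨hv, hrest⟩ := hlc
    have := ih (lccMat A v) (lccMat_isSymm A hA v) hrest
    simp only [List.foldl_cons, List.length_cons]
    rw [rank_lccMat A hA v hv, this]
    ring

lemma matrix_rank_eq_zero_iff (A : Matrix V V (ZMod 2)) : A.rank = 0 ↔ A = 0 := by
  constructor
  · intro h
    rw [Matrix.rank] at h
    have hbot : LinearMap.range A.mulVecLin = ⊥ := Submodule.finrank_eq_zero.mp h
    rw [LinearMap.range_eq_bot] at hbot
    ext x y
    have h0 : A *ᵥ Pi.single y 1 = 0 := by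
      rw [← Matrix.mulVecLin_apply, hbot]; rfl
    have hx := congrFun h0 y
    have hx2 := congrFun h0 x
    rw [Matrix.mulVec_single] at hx2
    simpa using hx2
  · rintro rfl; exact Matrix.rank_zero

/-- For an lc-sequence `φ = *_c v₁ ⋯ *_c v_k` for a graph `H` (loops allowed),
the resulting graph `Hφ` has no edges (all vertices isolated, i.e. zero adjacency
matrix) if and only if `k = rank A(H)` over GF(2). -/
theorem full_lcSeq_iff_length_eq_rank (A : Matrix V V (ZMod 2)) (hA : A.IsSymm)
    (σ : List V) (hnd : σ.Nodup) (hlc : IsLcSeq A σ) :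
    σ.foldl lccMat A = 0 ↔ σ.length = A.rank := by
  have h := rank_foldl_lcc σ A hA hlc
  rw [← matrix_rank_eq_zero_iff]
  omega
end

section
/- Let H be a connected graph (loops allowed) with at least one looped vertex. Define s(v) = |N^{ul}_H(v)| − |N^l_H(v)| and let MS(H) be the set of looped vertices v such that s(w) ≤ s(v) for all w ∈ N^l_H(v). Then for every v ∈ MS(H), each connected component of H|v containing no looped vertex consists of a single isolated vertex. -/
open Matrix

variable {V : Type*} [Fintype V] [DecidableEq V]

/-- The adjacency relation of a graph given by its GF(2) adjacency matrix. -/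
def adjRel {W : Type*} (B : Matrix W W (ZMod 2)) (u w : W) : Prop :=
  u ≠ w ∧ B u w = 1

/-- `N^l_H(v)`: looped neighbors of `v`. -/
def Nl (A : Matrix V V (ZMod 2)) (v : V) : Set V :=
  {x | x ≠ v ∧ A v x = 1 ∧ A x x = 1}

/-- `N^{ul}_H(v)`: unlooped neighbors of `v`. -/
def Nul (A : Matrix V V (ZMod 2)) (v : V) : Set V :=
  {x | x ≠ v ∧ A v x = 1 ∧ A x x = 0}

/-- `s(v) = |N^{ul}_H(v)| − |N^l_H(v)|`. -/
noncomputable def sFun (A : Matrix V V (ZMod 2)) (v : V) : ℤ :=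
  ((Nul A v).ncard : ℤ) - ((Nl A v).ncard : ℤ)

/-- `MS(H)`: the set of looped vertices `v` with `s(w) ≤ s(v)` for all `w ∈ N^l_H(v)`. -/
def MS (A : Matrix V V (ZMod 2)) : Set V :=
  {v | A v v = 1 ∧ ∀ w ∈ Nl A v, sFun A w ≤ sFun A v}

set_option linter.unusedSectionVars false

lemma zmod2_cases (a : ZMod 2) : a = 0 ∨ a = 1 := by revert a; decide

lemma key (A : Matrix V V (ZMod 2)) (hA : A.IsSymm) (v x : V) (hxv : x ≠ v)
    (hvv : A v v = 1) (hvx : A v x = 1) (hxx : A x x = 1)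
    (hs : sFun A x ≤ sFun A v)
    (hstar : ∀ y, y ≠ v → y ≠ x → A x y + A v y = 1 → A y y = A v y) :
    ∀ y, y ≠ v → y ≠ x → A x y = A v y := by
  classical
  set T10 : Set V := {y | y ≠ v ∧ y ≠ x ∧ A v y = 1 ∧ A x y = 0} with hT10
  set T01 : Set V := {y | y ≠ v ∧ y ≠ x ∧ A v y = 0 ∧ A x y = 1} with hT01
  set T110 : Set V := {y | y ≠ v ∧ y ≠ x ∧ A v y = 1 ∧ A x y = 1 ∧ A y y = 0} with hT110
  set T111 : Set V := {y | y ≠ v ∧ y ≠ x ∧ A v y = 1 ∧ A x y = 1 ∧ A y y = 1} with hT111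
  have loop10 : ∀ y ∈ T10, A y y = 1 := by
    rintro y ⟨h1, h2, h3, h4⟩
    have := hstar y h1 h2 (by rw [h3, h4]; decide)
    rw [this, h3]
  have loop01 : ∀ y ∈ T01, A y y = 0 := by
    rintro y ⟨h1, h2, h3, h4⟩
    have := hstar y h1 h2 (by rw [h3, h4]; decide)
    rw [this, h3]
  have hNulv : Nul A v = T110 := by
    ext y
    constructor
    · rintro ⟨h1, h2, h3⟩
      have hyx : y ≠ x := by rintro rfl; rw [hxx] at h3; exact one_ne_zero h3
      rcases zmod2_cases (A x y) with h | h
      · exact absurd h3 (by rw [loop10 y ⟨h1, hyx, h2, h⟩]; decide)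
      · exact ⟨h1, hyx, h2, h, h3⟩
    · rintro ⟨h1, _, h3, _, h5⟩; exact ⟨h1, h3, h5⟩
  have hNlv : Nl A v = insert x (T10 ∪ T111) := by
    ext y
    constructor
    · rintro ⟨h1, h2, h3⟩
      by_cases hyx : y = x
      · exact Or.inl hyx
      · rcases zmod2_cases (A x y) with h | h
        · exact Or.inr (Or.inl ⟨h1, hyx, h2, h⟩)
        · exact Or.inr (Or.inr ⟨h1, hyx, h2, h, h3⟩)
    · rintro (rfl | ⟨h1, _, h3, h4⟩ | ⟨h1, _, h3, _, h5⟩)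
      · exact ⟨hxv, hvx, hxx⟩
      · exact ⟨h1, h3, loop10 y ⟨h1, ‹_›, h3, h4⟩⟩
      · exact ⟨h1, h3, h5⟩
  have hAxv : A x v = 1 := (hA.apply v x).trans hvx
  have hNulx : Nul A x = T01 ∪ T110 := by
    ext y
    constructor
    · rintro ⟨h1, h2, h3⟩
      have hyv : y ≠ v := by rintro rfl; rw [hvv] at h3; exact one_ne_zero h3
      rcases zmod2_cases (A v y) with h | h
      · exact Or.inl ⟨hyv, h1, h, h2⟩
      · exact Or.inr ⟨hyv, h1, h, h2, h3⟩
    · rintro (⟨h1, h2, h3, h4⟩ | ⟨h1, h2, h3, h4, h5⟩)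
      · exact ⟨h2, h4, loop01 y ⟨h1, h2, h3, h4⟩⟩
      · exact ⟨h2, h4, h5⟩
  have hNlx : Nl A x = insert v T111 := by
    ext y
    constructor
    · rintro ⟨h1, h2, h3⟩
      by_cases hyv : y = v
      · exact Or.inl hyv
      · rcases zmod2_cases (A v y) with h | h
        · exact absurd h3 (by rw [loop01 y ⟨hyv, h1, h, h2⟩]; decide)
        · exact Or.inr ⟨hyv, h1, h, h2, h3⟩
    · rintro (rfl | ⟨h1, h2, h3, h4, h5⟩)
      · exact ⟨Ne.symm hxv, hAxv, hvv⟩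
      · exact ⟨h2, h4, h5⟩
  -- cardinality computations
  have fin : ∀ S : Set V, S.Finite := fun S => S.toFinite
  have d1 : Disjoint T10 T111 := by
    rw [Set.disjoint_left]
    rintro y ⟨_, _, _, h4⟩ ⟨_, _, _, h4', _⟩
    rw [h4] at h4'; exact zero_ne_one h4'
  have d2 : Disjoint T01 T110 := by
    rw [Set.disjoint_left]
    rintro y ⟨_, _, h3, _⟩ ⟨_, _, h3', _, _⟩
    rw [h3] at h3'; exact zero_ne_one h3'
  have hxmem : x ∉ T10 ∪ T111 := by rintro (⟨_, h, _⟩ | ⟨_, h, _⟩) <;> exact h rfl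
  have hvmem : v ∉ T111 := by rintro ⟨h, _⟩; exact h rfl
  have c1 : (Nul A v).ncard = T110.ncard := by rw [hNulv]
  have c2 : (Nl A v).ncard = T10.ncard + T111.ncard + 1 := by
    rw [hNlv, Set.ncard_insert_of_notMem hxmem ((fin _).union (fin _)),
      Set.ncard_union_eq d1 (fin _) (fin _)]
  have c3 : (Nul A x).ncard = T01.ncard + T110.ncard := by
    rw [hNulx, Set.ncard_union_eq d2 (fin _) (fin _)]
  have c4 : (Nl A x).ncard = T111.ncard + 1 := by
    rw [hNlx, Set.ncard_insert_of_notMem hvmem (fin _)]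
  rw [sFun, sFun, c1, c2, c3, c4] at hs
  push_cast at hs
  have h10 : T10.ncard = 0 := by omega
  have h01 : T01.ncard = 0 := by omega
  rw [Set.ncard_eq_zero (fin _)] at h10 h01
  intro y hyv hyx
  rcases zmod2_cases (A x y) with h | h <;> rcases zmod2_cases (A v y) with h' | h'
  · rw [h, h']
  · exact absurd (Set.eq_empty_iff_forall_notMem.mp h10 y ⟨hyv, hyx, h', h⟩) not_false
  · exact absurd (Set.eq_empty_iff_forall_notMem.mp h01 y ⟨hyv, hyx, h', h⟩) not_false
  · rw [h, h']

lemma schurC_symm (A : Matrix V V (ZMod 2)) (hA : A.IsSymm) (v : V)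
    (x y : {z : V // z ≠ v}) : schurC A v x y = schurC A v y x := by
  simp only [schurC]
  rw [hA.apply x.1 y.1, hA.apply v y.1, hA.apply x.1 v, mul_comm]

/-- Let `H` be a connected graph (loops allowed) with at least one looped vertex.
Then for every `v ∈ MS(H)`, each connected component of `H|v` containing no looped
vertex consists of a single isolated vertex. -/
theorem loopless_component_singleton_of_MS (A : Matrix V V (ZMod 2)) (hA : A.IsSymm)
    (hconn : ∀ u w : V, Relation.ReflTransGen (adjRel A) u w)
    (hloop : ∃ u : V, A u u = 1)
    (v : V) (hvMS : v ∈ MS A)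
    (C : Set {x : V // x ≠ v}) (w₀ : {x : V // x ≠ v})
    (hC : C = {y | Relation.ReflTransGen (adjRel (schurC A v)) w₀ y})
    (hloopless : ∀ x ∈ C, schurC A v x x = 0) :
    ∃ u : {x : V // x ≠ v}, C = {u} ∧ ∀ y, schurC A v u y = 0 := by
  classical
  obtain ⟨hvv, hmax⟩ := hvMS
  have haddself : ∀ a : ZMod 2, a + a = 0 := by decide
  have haddzero : ∀ a b : ZMod 2, a + b = 0 → a = b := by decide
  have hloopeq : ∀ x ∈ C, A x.1 x.1 = A v x.1 := by
    intro x hx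
    have h := hloopless x hx
    simp only [schurC] at h
    rw [hA.apply v x.1] at h
    have hmul : ∀ a : ZMod 2, a * a = a := by decide
    rw [hmul] at h
    exact haddzero _ _ h
  have hCclosed : ∀ x ∈ C, ∀ y, adjRel (schurC A v) x y → y ∈ C := by
    intro x hx y hxy
    rw [hC] at hx ⊢
    exact hx.tail hxy
  by_cases hcase : ∃ x ∈ C, A v x.1 = 1
  · obtain ⟨x, hxC, hvx⟩ := hcase
    have hxx : A x.1 x.1 = 1 := by rw [hloopeq x hxC, hvx]
    have hs : sFun A x.1 ≤ sFun A v := hmax x.1 ⟨x.2, hvx, hxx⟩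
    have hstar : ∀ y, y ≠ v → y ≠ x.1 → A x.1 y + A v y = 1 → A y y = A v y := by
      intro y hyv hyx hsum
      have hadj : adjRel (schurC A v) x ⟨y, hyv⟩ := by
        refine ⟨fun h => hyx (congrArg Subtype.val h).symm, ?_⟩
        simp only [schurC]
        rw [show A x.1 v = 1 from (hA.apply v x.1).trans hvx, one_mul]
        exact hsum
      have hyC := hCclosed x hxC _ hadj
      have := hloopeq ⟨y, hyv⟩ hyC
      exact this
    have hkey := key A hA v x.1 x.2 hvv hvx hxx hs hstar
    have hiso : ∀ y, schurC A v x y = 0 := by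
      intro y
      simp only [schurC]
      rw [show A x.1 v = 1 from (hA.apply v x.1).trans hvx, one_mul]
      by_cases h : y.1 = x.1
      · rw [h, hxx, hvx]; decide
      · rw [hkey y.1 y.2 h]; exact haddself _
    have hwx : x = w₀ := by
      have hx' : Relation.ReflTransGen (adjRel (schurC A v)) w₀ x := by
        rw [hC] at hxC; exact hxC
      rcases Relation.ReflTransGen.cases_tail hx' with h | ⟨c, _, hcx⟩
      · exact h
      · exfalso
        have h1 : schurC A v c x = 1 := hcx.2
        rw [← schurC_symm A hA v x c, hiso c] at h1
        exact zero_ne_one h1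
    refine ⟨x, ?_, hiso⟩
    ext z
    simp only [Set.mem_singleton_iff]
    constructor
    · intro hz
      rw [hC] at hz
      rw [← hwx] at hz
      rcases Relation.ReflTransGen.cases_head hz with h | ⟨c, hxc, _⟩
      · exact h.symm
      · exact absurd hxc.2 (by rw [hiso c]; exact zero_ne_one)
    · rintro rfl; exact hxC
  · exfalso
    push_neg at hcase
    have hreach : ∀ y : V, Relation.ReflTransGen (adjRel A) w₀.1 y →
        ∃ h : y ≠ v, (⟨y, h⟩ : {z : V // z ≠ v}) ∈ C := by
      intro y hy
      induction hy with
      | refl => exact ⟨w₀.2, by rw [hC]; exact Relation.ReflTransGen.refl⟩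
      | @tail b c hab hbc ih =>
        obtain ⟨hb, hbC⟩ := ih
        have hvb : A v b = 0 := by
          rcases zmod2_cases (A v b) with h | h
          · exact h
          · exact absurd h (hcase ⟨b, hb⟩ hbC)
        obtain ⟨hne, hAbc⟩ := hbc
        have hAbv : A b v = 0 := (hA.apply v b).trans hvb
        have hcv : c ≠ v := by
          rintro rfl
          rw [hAbv] at hAbc
          exact zero_ne_one hAbc
        have hadj : adjRel (schurC A v) ⟨b, hb⟩ ⟨c, hcv⟩ := by
          refine ⟨fun h => hne (congrArg Subtype.val h), ?_⟩
          simp only [schurC]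
          rw [hAbv, zero_mul, add_zero]
          exact hAbc
        exact ⟨hcv, hCclosed _ hbC _ hadj⟩
    obtain ⟨h, _⟩ := hreach v (hconn w₀.1 v)
    exact h rfl
end

section
/- For any graph H (loops allowed), the set system D_H = (V(H), S), where X ∈ S if and only if the principal submatrix A(H)[X] (the adjacency matrix over GF(2) of the induced subgraph H[X]) is invertible, is a delta-matroid. (The empty matrix is invertible by convention, so ∅ ∈ S.) -/
/-!
Write `T_X` for the identity matrix with its rows in `X` replaced by those of `A`
(`Matrix.withRows A X`); its determinant is that of `A[X]`. If `A[X]` is invertible, the pivot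
`B = T_{Xᶜ} T_X⁻¹` satisfies `T^B_Z T_X = T_{X ∆ Z}`, so `B[Z]` is invertible iff `A[X ∆ Z]` is.
In characteristic 2, `T_Xᵀ T_{Xᶜ} + T_{Xᶜ}ᵀ T_X = Aᵀ + A` vanishes for symmetric `A`, which makes
`B` symmetric. Pivoting at `X` thus reduces the exchange axiom for `X, Y` to the set `Z = X ∆ Y`
of `B`: if `B x x ≠ 0` take `y = x`; otherwise invertibility of `B[Z]` gives `y ∈ Z` with
`B y x ≠ 0`, and then `B[{x, y}] = [[0, b], [b, *]]` is invertible.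
-/

open Matrix

variable {V : Type*} [Fintype V] [DecidableEq V] {U : Type*} [DecidableEq U]

/-- A set system: a finite ground set together with a family of subsets. -/
structure SetSystem (U : Type*) [DecidableEq U] where
  ground : Finset U
  sets : Set (Finset U)

/-- Delta-matroid: `S` nonempty and the symmetric exchange axiom holds. -/
def IsDeltaMatroid (D : SetSystem U) : Prop :=
  D.sets.Nonempty ∧
  ∀ X ∈ D.sets, ∀ Y ∈ D.sets, ∀ x ∈ symmDiff X Y,
    ∃ y ∈ symmDiff X Y, symmDiff X {x, y} ∈ D.sets

/-- The principal submatrix `A[X]` of a GF(2) matrix is invertible (the empty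
matrix, for `X = ∅`, is invertible by convention). -/
def PrincInv (A : Matrix V V (ZMod 2)) (X : Finset V) : Prop :=
  IsUnit (A.submatrix (fun i : X => (i : V)) (fun i : X => (i : V))).det

/-- The set system `D_H = (V(H), S)` of a graph `H` (loops allowed) with GF(2)
adjacency matrix `A`: `X ∈ S` iff `A(H[X]) = A[X]` is invertible. -/
def DM (A : Matrix V V (ZMod 2)) : SetSystem V :=
  ⟨Finset.univ, {X | PrincInv A X}⟩

namespace Matrix

variable {n R K : Type*}

def withRows [DecidableEq n] [Zero R] [One R] (A : Matrix n n R) (X : Finset n) : Matrix n n R :=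
  of fun i => if i ∈ X then A i else (1 : Matrix n n R) i

@[simp]
theorem withRows_empty [DecidableEq n] [Zero R] [One R] (A : Matrix n n R) :
    withRows A ∅ = 1 := by
  ext i j
  simp [withRows]

variable [Fintype n]

theorem mulVec_apply_eq_sum_of_forall_notMem [NonUnitalNonAssocSemiring R] (A : Matrix n n R)
    {S : Finset n} {v : n → R} (hv : ∀ j ∉ S, v j = 0) (i : n) :
    (A *ᵥ v) i = ∑ j ∈ S, A i j * v j :=
  (Finset.sum_subset (Finset.subset_univ S) fun j _ hj => by simp [hv j hj]).symm

variable [DecidableEq n]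

section CommRing

variable [CommRing R] (A : Matrix n n R) (X : Finset n)

theorem det_withRows :
    (withRows A X).det = (A.submatrix (fun i : X => (i : n)) (fun i : X => (i : n))).det := by
  let e := Equiv.sumCompl (· ∈ X)
  have hblocks : (withRows A X).submatrix e e =
      fromBlocks (A.submatrix (fun i : X => (i : n)) (fun i : X => (i : n)))
        (A.submatrix (fun i : X => (i : n)) (fun i : {i // i ∉ X} => (i : n))) 0 1 := by
    ext (i | i) (j | j)
    · simp [withRows, e]
    · simp [withRows, e]
    · simp [withRows, e, i.2, one_apply_ne fun h : (i : n) = j => i.2 (h ▸ j.2)]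
    · simp [withRows, e, i.2, one_apply, Subtype.ext_iff]
  rw [← det_submatrix_equiv_self e, hblocks, det_fromBlocks_zero₂₁, det_one, mul_one]

theorem withRows_mul (N : Matrix n n R) :
    withRows A X * N = of fun i => if i ∈ X then (A * N) i else N i := by
  ext i j
  by_cases hi : i ∈ X <;> simp [withRows, mul_apply, hi, one_apply]

theorem withRows_mulVec_apply (v : n → R) (i : n) :
    (withRows A X *ᵥ v) i = if i ∈ X then (A *ᵥ v) i else v i := by
  by_cases hi : i ∈ X <;> simp [withRows, mulVec, dotProduct, hi, one_apply]

theorem withRows_mulVec_eq_zero_iff {v : n → R} :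
    withRows A X *ᵥ v = 0 ↔ (∀ i ∉ X, v i = 0) ∧ ∀ i ∈ X, (A *ᵥ v) i = 0 := by
  simp only [funext_iff, withRows_mulVec_apply, Pi.zero_apply]
  refine ⟨fun h => ⟨fun i hi => ?_, fun i hi => ?_⟩, fun h i => ?_⟩
  · simpa [hi] using h i
  · simpa [hi] using h i
  · by_cases hi : i ∈ X
    · simpa [hi] using h.2 i hi
    · simpa [hi] using h.1 i hi

theorem transpose_withRows_mul_withRows_compl_add :
    (withRows A X)ᵀ * withRows A Xᶜ + (withRows A Xᶜ)ᵀ * withRows A X = Aᵀ + A := by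
  ext j k
  have hsum : (Aᵀ + A) j k =
      ∑ i, (A i j * (1 : Matrix n n R) i k + (1 : Matrix n n R) i j * A i k) := by
    simp [Finset.sum_add_distrib, one_apply]
  rw [hsum, add_apply, mul_apply, mul_apply, ← Finset.sum_add_distrib]
  refine Finset.sum_congr rfl fun i _ => ?_
  by_cases hi : i ∈ X <;> simp [withRows, hi, add_comm]

noncomputable def pivot : Matrix n n R := withRows A Xᶜ * (withRows A X)⁻¹

variable {A X}

theorem withRows_pivot_mul (hX : IsUnit (withRows A X).det) (Z : Finset n) :
    withRows (pivot A X) Z * withRows A X = withRows A (symmDiff X Z) := by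
  rw [withRows_mul, pivot, nonsing_inv_mul_cancel_right _ _ hX]
  ext i j
  by_cases hiX : i ∈ X <;> by_cases hiZ : i ∈ Z <;>
    simp [withRows, hiX, hiZ, Finset.mem_symmDiff]

theorem isUnit_det_withRows_pivot_iff (hX : IsUnit (withRows A X).det) (Z : Finset n) :
    IsUnit (withRows (pivot A X) Z).det ↔ IsUnit (withRows A (symmDiff X Z)).det := by
  rw [← withRows_pivot_mul hX, det_mul, IsUnit.mul_right_iff hX]

theorem isSymm_transpose_withRows_mul_withRows_compl [CharP R 2] (hA : A.IsSymm) :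
    ((withRows A X)ᵀ * withRows A Xᶜ).IsSymm := IsSymm.ext fun j k => by
  have h := congr_fun₂ (transpose_withRows_mul_withRows_compl_add A X) k j
  rw [add_apply, add_apply, transpose_apply, hA.apply, CharTwo.add_self_eq_zero,
    CharTwo.add_eq_zero] at h
  rw [h, ← transpose_transpose (withRows A X), ← transpose_mul, transpose_apply,
    transpose_transpose]

theorem isSymm_pivot [CharP R 2] (hA : A.IsSymm) (hX : IsUnit (withRows A X).det) :
    (pivot A X).IsSymm := by
  have hB : pivot A X =
      (withRows A X)⁻¹ᵀ * ((withRows A X)ᵀ * withRows A Xᶜ) * (withRows A X)⁻¹ := by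
    rw [← Matrix.mul_assoc, ← transpose_mul, mul_nonsing_inv _ hX, transpose_one,
      Matrix.one_mul, pivot]
  rw [hB, IsSymm, transpose_mul, transpose_mul, transpose_transpose,
    (isSymm_transpose_withRows_mul_withRows_compl hA).eq]
  simp only [Matrix.mul_assoc]

end CommRing

section Field

variable [Field K] {B : Matrix n n K} {x y : n}

theorem isUnit_det_iff_forall_mulVec_eq_zero {M : Matrix n n K} :
    IsUnit M.det ↔ ∀ v, M *ᵥ v = 0 → v = 0 := by
  rw [isUnit_iff_ne_zero, Ne, ← exists_mulVec_eq_zero_iff]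
  push Not
  exact forall_congr' fun v => not_imp_not

theorem exists_mem_apply_ne_zero_of_isUnit_det_withRows {Z : Finset n}
    (hZ : IsUnit (withRows B Z).det) (hx : x ∈ Z) : ∃ y ∈ Z, B y x ≠ 0 := by
  by_contra! h
  have hsingle : withRows B Z *ᵥ Pi.single x 1 = 0 := by
    refine (withRows_mulVec_eq_zero_iff B Z).mpr ⟨fun i hi => ?_, fun i hi => ?_⟩
    · exact Pi.single_eq_of_ne (ne_of_mem_of_not_mem hx hi).symm 1
    · simp [h i hi]
  simpa using congr_fun (isUnit_det_iff_forall_mulVec_eq_zero.mp hZ _ hsingle) x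

theorem isUnit_det_withRows_singleton (hxx : B x x ≠ 0) : IsUnit (withRows B {x}).det := by
  refine isUnit_det_iff_forall_mulVec_eq_zero.mpr fun v hv => ?_
  obtain ⟨hout, hin⟩ := (withRows_mulVec_eq_zero_iff B {x}).mp hv
  have hvx : v x = 0 := by
    have h := hin x (Finset.mem_singleton_self x)
    rw [mulVec_apply_eq_sum_of_forall_notMem B hout, Finset.sum_singleton] at h
    exact (mul_eq_zero.mp h).resolve_left hxx
  funext i
  by_cases hi : i = x
  · rw [hi, hvx, Pi.zero_apply]
  · exact hout i (by simpa using hi)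

theorem isUnit_det_withRows_pair (hB : B.IsSymm) (hxx : B x x = 0) (hyx : B y x ≠ 0) :
    IsUnit (withRows B {x, y}).det := by
  have hxy : x ≠ y := by rintro rfl; exact hyx hxx
  refine isUnit_det_iff_forall_mulVec_eq_zero.mpr fun v hv => ?_
  obtain ⟨hout, hin⟩ := (withRows_mulVec_eq_zero_iff B {x, y}).mp hv
  have hsum (i : n) : (B *ᵥ v) i = B i x * v x + B i y * v y := by
    rw [mulVec_apply_eq_sum_of_forall_notMem B hout, Finset.sum_pair hxy]
  have hvy : v y = 0 := by
    have h := hin x (by simp)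
    rw [hsum, hxx, zero_mul, zero_add, hB.apply] at h
    exact (mul_eq_zero.mp h).resolve_left hyx
  have hvx : v x = 0 := by
    have h := hin y (by simp)
    rw [hsum, hvy, mul_zero, add_zero] at h
    exact (mul_eq_zero.mp h).resolve_left hyx
  funext i
  by_cases hi : i ∈ ({x, y} : Finset n)
  · rcases Finset.mem_insert.mp hi with rfl | hi
    · exact hvx
    · rw [Finset.mem_singleton.mp hi]
      exact hvy
  · exact hout i hi

theorem exists_mem_isUnit_det_withRows_pair {Z : Finset n} (hB : B.IsSymm)
    (hZ : IsUnit (withRows B Z).det) (hx : x ∈ Z) : ∃ y ∈ Z, IsUnit (withRows B {x, y}).det := by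
  by_cases hxx : B x x = 0
  · obtain ⟨y, hyZ, hyx⟩ := exists_mem_apply_ne_zero_of_isUnit_det_withRows hZ hx
    exact ⟨y, hyZ, isUnit_det_withRows_pair hB hxx hyx⟩
  · exact ⟨x, hx, by simpa using isUnit_det_withRows_singleton hxx⟩

end Field

end Matrix

theorem princInv_iff_isUnit_det_withRows (A : Matrix V V (ZMod 2)) (X : Finset V) :
    PrincInv A X ↔ IsUnit (withRows A X).det := by
  rw [PrincInv, det_withRows]

/-- For any graph `H` (loops allowed) with symmetric GF(2) adjacency matrix `A`,
the set system `D_H` is a delta-matroid. -/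
theorem isDeltaMatroid_DM (A : Matrix V V (ZMod 2)) (hA : A.IsSymm) :
    IsDeltaMatroid (DM A) := by
  refine ⟨⟨∅, (princInv_iff_isUnit_det_withRows A ∅).mpr (by simp)⟩, fun X hX Y hY x hx => ?_⟩
  have hXunit := (princInv_iff_isUnit_det_withRows A X).mp hX
  have hZ : IsUnit (withRows (pivot A X) (symmDiff X Y)).det := by
    rw [isUnit_det_withRows_pivot_iff hXunit, symmDiff_symmDiff_cancel_left]
    exact (princInv_iff_isUnit_det_withRows A Y).mp hY
  obtain ⟨y, hy, hxy⟩ := exists_mem_isUnit_det_withRows_pair (isSymm_pivot hA hXunit) hZ hx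
  exact ⟨y, hy, (princInv_iff_isUnit_det_withRows A _).mpr
    ((isUnit_det_withRows_pivot_iff hXunit _).mp hxy)⟩
end

section
/- Let H be a graph (loops allowed) and let v be a looped vertex of H. Then D_{H*v} = D_H * {v}, i.e., for every X ⊆ V(H), the GF(2) principal submatrix A(H*v)[X] is invertible if and only if A(H)[X Δ {v}] is invertible. -/
open Matrix

variable {V : Type*} [Fintype V] [DecidableEq V]

/-- The adjacency matrix of the local complement `H*v` at a looped vertex `v`:
adjacency (and loop status) is complemented exactly on the neighborhood
`N_H(v) = {w ≠ v : A v w = 1}`, while all entries involving `v` are unchanged. -/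
def lcMat (A : Matrix V V (ZMod 2)) (v : V) : Matrix V V (ZMod 2) :=
  fun x y => if x = v ∨ y = v then A x y else A x y + A x v * A v y

lemma sub_eq_add' (a b : ZMod 2) : a - b = a + b := by
  rw [sub_eq_add_neg, CharTwo.neg_eq]

lemma schur_key (M : Matrix V V (ZMod 2)) (v : V) (hMv : M v v = 1)
    (S : Finset V) (hvS : v ∉ S) :
    (M.submatrix (fun i : (insert v S : Finset V) => (i : V))
      (fun i : (insert v S : Finset V) => (i : V))).det
      = (Matrix.of (fun x y : S => M x y + M x v * M v y)).det := by
  classical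
  let e : Unit ⊕ S ≃ (insert v S : Finset V) :=
    { toFun := Sum.elim (fun _ => ⟨v, Finset.mem_insert_self v S⟩)
        (fun x => ⟨x, Finset.mem_insert_of_mem x.2⟩)
      invFun := fun x => if h : (x : V) = v then Sum.inl () else
        Sum.inr ⟨x, by
          rcases Finset.mem_insert.mp x.2 with h' | h'
          · exact absurd h' h
          · exact h'⟩
      left_inv := by
        rintro (⟨⟩ | x)
        · simp
        · have : (x : V) ≠ v := fun h => hvS (h ▸ x.2)
          simp [this]
      right_inv := by
        rintro ⟨x, hx⟩
        by_cases h : x = v <;> simp [h] }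
  have h1 : (M.submatrix (fun i : (insert v S : Finset V) => (i : V))
      (fun i : (insert v S : Finset V) => (i : V))).det
      = ((M.submatrix (fun i : (insert v S : Finset V) => (i : V))
      (fun i : (insert v S : Finset V) => (i : V))).submatrix e e).det :=
    (Matrix.det_submatrix_equiv_self e _).symm
  have h2 : (M.submatrix (fun i : (insert v S : Finset V) => (i : V))
      (fun i : (insert v S : Finset V) => (i : V))).submatrix e e
      = Matrix.fromBlocks 1 (Matrix.of fun _ : Unit => fun y : S => M v y)
          (Matrix.of fun x : S => fun _ : Unit => M x v)
          (Matrix.of fun x y : S => M x y) := by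
    ext i j
    rcases i with i | i <;> rcases j with j | j <;>
      simp [e, Matrix.fromBlocks, Matrix.one_apply, hMv]
  rw [h1, h2, Matrix.det_fromBlocks_one₁₁]
  congr 1
  ext x y
  simp [Matrix.mul_apply, sub_eq_add']

/-- `D_{H*v} = D_H * {v}`: for a looped vertex `v` of a graph `H` (loops allowed)
and every `X ⊆ V(H)`, the principal submatrix `A(H*v)[X]` is invertible over GF(2)
iff `A(H)[X Δ {v}]` is invertible. -/
theorem DM_lc_eq_twist (A : Matrix V V (ZMod 2)) (hA : A.IsSymm) (v : V)
    (hv : A v v = 1) (X : Finset V) :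
    PrincInv (lcMat A v) X ↔ PrincInv A (symmDiff X {v}) := by
  classical
  by_cases hvX : v ∈ X
  · have hsd : symmDiff X {v} = X.erase v := by
      ext w
      simp [Finset.mem_symmDiff, Finset.mem_erase, hvX]
      constructor
      · rintro (⟨h1, h2⟩ | ⟨h1, h2⟩)
        · exact ⟨h2, h1⟩
        · exact absurd hvX (by simpa [h1] using h2)
      · rintro ⟨h1, h2⟩; exact Or.inl ⟨h2, h1⟩
    rw [hsd]
    have hX : X = insert v (X.erase v) := (Finset.insert_erase hvX).symm
    have hBvv : lcMat A v v v = 1 := by simp [lcMat, hv]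
    unfold PrincInv
    conv_lhs => rw [show (X : Finset V) = insert v (X.erase v) from hX]
    rw [schur_key (lcMat A v) v hBvv (X.erase v) (Finset.notMem_erase v X)]
    have : (Matrix.of fun x y : (X.erase v : Finset V) =>
        lcMat A v x y + lcMat A v x v * lcMat A v v y)
        = A.submatrix (fun i : (X.erase v : Finset V) => (i : V))
          (fun i : (X.erase v : Finset V) => (i : V)) := by
      ext x y
      have hx : (x : V) ≠ v := Finset.ne_of_mem_erase x.2
      have hy : (y : V) ≠ v := Finset.ne_of_mem_erase y.2
      simp [lcMat, hx, hy]
      ring_nf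
      rw [show (2 : ZMod 2) = 0 by decide]
      ring
    rw [this]

  · have hsd : symmDiff X {v} = insert v X := by
      ext w
      simp [Finset.mem_symmDiff, Finset.mem_insert]
      constructor
      · rintro (⟨h1, h2⟩ | ⟨h1, h2⟩)
        · exact Or.inr h1
        · exact Or.inl h1
      · rintro (h | h)
        · exact Or.inr ⟨h, by simpa [h] using hvX⟩
        · exact Or.inl ⟨h, fun hw => hvX (hw ▸ h)⟩
    rw [hsd]
    unfold PrincInv
    rw [schur_key A v hv X hvX]
    have : (Matrix.of fun x y : (X : Finset V) => A x y + A x v * A v y)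
        = (lcMat A v).submatrix (fun i : (X : Finset V) => (i : V))
          (fun i : (X : Finset V) => (i : V)) := by
      ext x y
      have hx : (x : V) ≠ v := fun h => hvX (h ▸ x.2)
      have hy : (y : V) ≠ v := fun h => hvX (h ▸ y.2)
      simp [lcMat, hx, hy]
    rw [this]
end

section
/- Let H be a graph (loops allowed). A sequence σ = (v₁,…,v_k) of mutually distinct vertices satisfies that A(H[{v₁,…,v_i}]) is invertible over GF(2) for all 0 ≤ i ≤ k if and only if φ = *_c v₁ *_c v₂ ⋯ *_c v_k is an applicable lc-sequence for H (i.e., for each i, v_i is a looped vertex of H *_c v₁ ⋯ *_c v_{i−1}). -/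
open Matrix

variable {V : Type*} [Fintype V] [DecidableEq V]

lemma princInv_empty (A : Matrix V V (ZMod 2)) : PrincInv A ∅ := by
  unfold PrincInv
  rw [Matrix.det_isEmpty]
  exact isUnit_one

lemma zmod2_isUnit_iff (a : ZMod 2) : IsUnit a ↔ a = 1 := by revert a; decide

lemma princInv_singleton (A : Matrix V V (ZMod 2)) (v : V) :
    PrincInv A {v} ↔ A v v = 1 := by
  unfold PrincInv
  haveI : Unique {x // x ∈ ({v} : Finset V)} :=
    ⟨⟨⟨v, Finset.mem_singleton_self v⟩⟩, fun x => Subtype.ext (Finset.mem_singleton.mp x.2)⟩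
  rw [Matrix.det_unique, zmod2_isUnit_iff, Matrix.submatrix_apply]
  have hd : ((default : {x // x ∈ ({v} : Finset V)}) : V) = v :=
    Finset.mem_singleton.mp (default : {x // x ∈ ({v} : Finset V)}).2
  rw [hd]

/-- the key Schur-complement lemma -/
lemma schur (A : Matrix V V (ZMod 2)) (v : V) (hv : A v v = 1) (X : Finset V)
    (hvX : v ∉ X) : PrincInv A (insert v X) ↔ PrincInv (lccMat A v) X := by
  classical
  let e : ({x // x ∈ X} ⊕ Unit) ≃ {x // x ∈ insert v X} :=
    { toFun := Sum.elim (fun x => ⟨x, Finset.mem_insert_of_mem x.2⟩)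
        (fun _ => ⟨v, Finset.mem_insert_self v X⟩)
      invFun := fun p => if h : (p : V) ∈ X then Sum.inl ⟨p, h⟩ else Sum.inr Unit.unit
      left_inv := by
        rintro (x | u)
        · simp [x.2]
        · simp [hvX]
      right_inv := by
        rintro ⟨p, hp⟩
        rcases Finset.mem_insert.mp hp with h | h
        · subst h; simp [hvX]
        · simp [h] }
  have key : (A.submatrix (fun i : (insert v X : Finset V) => (i : V))
        (fun i : (insert v X : Finset V) => (i : V))).det
      = ((lccMat A v).submatrix (fun i : X => (i : V)) (fun i : X => (i : V))).det := by
    rw [← Matrix.det_submatrix_equiv_self e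
      (A.submatrix (fun i : (insert v X : Finset V) => (i : V))
        (fun i : (insert v X : Finset V) => (i : V)))]
    have hM : (A.submatrix (fun i : (insert v X : Finset V) => (i : V))
          (fun i : (insert v X : Finset V) => (i : V))).submatrix e e
        = Matrix.fromBlocks (l := {x // x ∈ X}) (n := {x // x ∈ X}) (o := Unit) (m := Unit) (A.submatrix (fun i : X => (i : V)) (fun i => (i : V)))
            (Matrix.of fun (x : {x // x ∈ X}) (_ : Unit) => A (x : V) v)
            (Matrix.of fun (_ : Unit) (y : {x // x ∈ X}) => A v (y : V))
            (1 : Matrix Unit Unit (ZMod 2)) := by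
      have he₁ : ∀ x : X, ((e (Sum.inl x) : {x // x ∈ insert v X}) : V) = x := fun _ => rfl
      have he₂ : ∀ u : Unit, ((e (Sum.inr u) : {x // x ∈ insert v X}) : V) = v := fun _ => rfl
      ext i j
      rcases i with x | u <;> rcases j with y | u' <;>
        simp [Matrix.submatrix_apply, he₁, he₂, Matrix.fromBlocks_apply₁₁,
          Matrix.fromBlocks_apply₁₂, Matrix.fromBlocks_apply₂₁, Matrix.fromBlocks_apply₂₂,
          Matrix.one_apply, hv]
    haveI : Invertible (1 : Matrix Unit Unit (ZMod 2)) := invertibleOne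
    rw [hM, Matrix.det_fromBlocks₂₂, Matrix.det_one, one_mul, invOf_one, Matrix.mul_one]
    congr 1
    ext x y
    have hx : (x : V) ≠ v := fun h => hvX (h ▸ x.2)
    have hy : (y : V) ≠ v := fun h => hvX (h ▸ y.2)
    simp [Matrix.mul_apply, Matrix.sub_apply, lccMat, hx, hy, CharTwo.sub_eq_add]
  unfold PrincInv
  rw [key]

/-- A sequence `σ = (v₁,…,v_k)` of mutually distinct vertices of a graph `H`
(loops allowed) satisfies that `A(H[{v₁,…,v_i}])` is invertible over GF(2) for
all `0 ≤ i ≤ k` iff `φ = *_c v₁ ⋯ *_c v_k` is an applicable lc-sequence for `H`. -/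
theorem lcSeq_iff_initial_principal_minors (A : Matrix V V (ZMod 2)) (hA : A.IsSymm)
    (σ : List V) (hnd : σ.Nodup) :
    (∀ i ≤ σ.length, PrincInv A (σ.take i).toFinset) ↔ IsLcSeq A σ := by
  clear hA
  induction σ generalizing A with
  | nil =>
    constructor
    · intro _; trivial
    · intro _ i hi
      have hi0 : i = 0 := Nat.le_zero.mp (by simpa using hi)
      subst hi0
      simpa using princInv_empty A
  | cons v rest ih =>
    have hvr : v ∉ rest := (List.nodup_cons.mp hnd).1
    have hndr : rest.Nodup := (List.nodup_cons.mp hnd).2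
    have hsub : ∀ i, v ∉ (rest.take i).toFinset := by
      intro i h
      exact hvr (List.mem_of_mem_take (List.mem_toFinset.mp h))
    constructor
    · intro h
      have hv : A v v = 1 := by
        have := h 1 (by simp)
        simpa [princInv_singleton] using this
      refine ⟨hv, (ih (lccMat A v) hndr).mp ?_⟩
      intro i hi
      have := h (i + 1) (by simpa using Nat.succ_le_succ hi)
      rw [List.take_succ_cons, List.toFinset_cons] at this
      exact (schur A v hv _ (hsub i)).mp this
    · rintro ⟨hv, hrest⟩ i hi
      cases i with
      | zero => simpa using princInv_empty A
      | succ j =>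
        rw [List.take_succ_cons, List.toFinset_cons]
        exact (schur A v hv _ (hsub j)).mpr
          ((ih (lccMat A v) hndr).mpr hrest j (Nat.succ_le_succ_iff.mp hi))
end

section
/- Let G be a connected 4-regular multigraph (every vertex has degree 4, a loop counting 2), let P be a circuit partition of G, and let v be a vertex of G. Among the three circuit partitions obtained by choosing one of the three possible transitions (pairings of the four half-edges at v into two pairs) at v while keeping P's transitions at all other vertices, two have equal cardinality k and the third has cardinality k + 1. -/
/-
A 4-regular multigraph with a transition system is modelled via half-edges
("darts"): `ε` is a fixed-point-free involution on the darts pairing them into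
edges, `π` assigns each dart to its vertex, and each vertex carries exactly four
darts. A circuit partition corresponds to a fixed-point-free, vertex-preserving
involution `τ` on the darts (the transition: the pairing of the four half-edges
at each vertex into two pairs); its circuits are the orbits of the group
generated by `ε` and `τ`, i.e. the classes of the quotient by the relation
generated by `ε` and `τ`.
-/

/-- The number of circuits of the circuit partition determined by the edge
involution `ε` and the transition involution `τ`: the number of equivalence
classes of darts under the equivalence generated by `ε` and `τ`. -/
noncomputable def circuitCount {D : Type*} (ε τ : D → D) : ℕ :=
  Nat.card (Quot (fun a b : D => ε a = b ∨ τ a = b))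

/-
Split `v` open: let `σ` be the transition system of `P` in which the four half-edges at `v` are
fixed points. The class of such a fixed point `x` under `⟨ε, σ⟩` is the cycle of `x` under
`ρ = σ ε`, on which `ε` and `σ` act as the reflections `k ↦ -k - 1` and `k ↦ -k` of the exponent.
As `ε` has no fixed point, this cycle has even length `2 m`, and the fixed points of `σ` on it
are exactly `x` and `ρ ^ m x`. So the four half-edges at `v` form two pairs lying in two different
classes. The transition at `v` joining each pair gives as many circuits as `σ`; each of the other
two joins the two classes into one circuit, giving one circuit fewer.
-/

open Equiv Finset Function MulAction Relation

def circuitRel {α : Type*} (e s : α → α) (a b : α) : Prop := e a = b ∨ s a = b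

section Quot

variable {α : Type*} {r r' : α → α → Prop}

theorem card_quot_eq_of_le_eqvGen (h : r ≤ EqvGen r') (h' : r' ≤ EqvGen r) :
    Nat.card (Quot r) = Nat.card (Quot r') :=
  Nat.card_congr
    { toFun := Quot.lift (Quot.mk r') fun x y hxy => Quot.eqvGen_sound (h x y hxy)
      invFun := Quot.lift (Quot.mk r) fun x y hxy => Quot.eqvGen_sound (h' x y hxy)
      left_inv := by rintro ⟨x⟩; rfl
      right_inv := by rintro ⟨x⟩; rfl }

theorem eqvGen_or_of_eqvGen {A : α → Prop} (hA : ∀ x y, EqvGen r x y → A x → A y)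
    (h : ∀ x y, r' x y → EqvGen r x y ∨ A x ∧ A y) {x y : α} (hxy : EqvGen r' x y) :
    EqvGen r x y ∨ A x ∧ A y := by
  induction hxy with
  | rel x y hxy => exact h x y hxy
  | refl x => exact Or.inl (EqvGen.refl x)
  | symm x y _ ih => exact ih.imp (EqvGen.symm x y) And.symm
  | trans x y z _ _ ih₁ ih₂ =>
    rcases ih₁ with hxy | ⟨hx, hy⟩ <;> rcases ih₂ with hyz | ⟨hy', hz⟩
    · exact Or.inl (hxy.trans _ _ _ hyz)
    · exact Or.inr ⟨hA y x (hxy.symm _ _) hy', hz⟩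
    · exact Or.inr ⟨hx, hA y z hyz hy⟩
    · exact Or.inr ⟨hx, hz⟩

theorem card_quot_add_one_of_merge [Finite α] {a c : α} (h : r ≤ EqvGen r')
    (h' : ∀ x y, r' x y →
      EqvGen r x y ∨ (EqvGen r a x ∨ EqvGen r c x) ∧ (EqvGen r a y ∨ EqvGen r c y))
    (hac : ¬ EqvGen r a c) (hac' : EqvGen r' a c) :
    Nat.card (Quot r') + 1 = Nat.card (Quot r) := by
  classical
  let φ : Quot r → Quot r' := Quot.lift (Quot.mk r') fun x y hxy => Quot.eqvGen_sound (h x y hxy)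
  have hφ : Bijective fun q : {q : Quot r // q ≠ Quot.mk r c} => φ q := by
    constructor
    · rintro ⟨⟨x⟩, hx⟩ ⟨⟨y⟩, hy⟩ hxy
      have hsat : ∀ u w, EqvGen r u w → (EqvGen r a u ∨ EqvGen r c u) →
          (EqvGen r a w ∨ EqvGen r c w) := fun u w huw hu =>
        hu.imp (fun hau => hau.trans _ _ _ huw) (fun hcu => hcu.trans _ _ _ huw)
      have toA : ∀ u, Quot.mk r u ≠ Quot.mk r c → (EqvGen r a u ∨ EqvGen r c u) →
          EqvGen r a u := fun u hu hA =>
        hA.resolve_right fun hcu => hu (Quot.eqvGen_sound (EqvGen.symm _ _ hcu))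
      refine Subtype.ext (Quot.eqvGen_sound ?_)
      rcases eqvGen_or_of_eqvGen hsat h' (Quot.eqvGen_exact hxy) with hxy | ⟨hxA, hyA⟩
      · exact hxy
      · exact ((toA x hx hxA).symm _ _).trans _ _ _ (toA y hy hyA)
    · rintro ⟨d⟩
      by_cases hd : Quot.mk r d = Quot.mk r c
      · refine ⟨⟨Quot.mk r a, fun ha => hac (Quot.eqvGen_exact ha)⟩, ?_⟩
        exact (Quot.eqvGen_sound hac').trans
          (Quot.eqvGen_sound (EqvGen.eqvGen_le h _ _ (Quot.eqvGen_exact hd.symm)))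
      · exact ⟨⟨Quot.mk r d, hd⟩, rfl⟩
  rw [← Nat.card_congr (Equiv.ofBijective _ hφ), ← Finite.card_option]
  exact Nat.card_congr (Equiv.optionSubtypeNe _)

end Quot

section Involutions

variable {α : Type*} {e s : Perm α}

theorem eqvGen_circuitRel_mul_apply (x : α) : EqvGen (circuitRel e s) x ((s * e) x) :=
  .trans x (e x) _ (.rel _ _ (Or.inl rfl)) (.rel _ _ (Or.inr rfl))

theorem eqvGen_circuitRel_of_sameCycle [Finite α] {x y : α} (h : (s * e).SameCycle x y) :
    EqvGen (circuitRel e s) x y := by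
  obtain ⟨n, rfl⟩ := h.exists_nat_pow_eq
  clear h
  induction n with
  | zero => exact EqvGen.refl x
  | succ n ih =>
    rw [pow_succ', Perm.mul_apply]
    exact ih.trans _ _ _ (eqvGen_circuitRel_mul_apply _)

theorem mul_zpow_mul_eq (he : Involutive e) (hs : Involutive s) (k : ℤ) :
    e * (s * e) ^ k = (s * e) ^ (-k - 1) * s := by
  have hee : e * e = 1 := Perm.ext fun x => he x
  have hss : s * s = 1 := Perm.ext fun x => hs x
  have he' : e⁻¹ = e := inv_eq_of_mul_eq_one_right hee
  have hs' : s⁻¹ = s := inv_eq_of_mul_eq_one_right hss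
  have hconj : e * (s * e) * e⁻¹ = (s * e)⁻¹ := by
    rw [mul_inv_rev, he', hs', mul_assoc, mul_assoc, hee, mul_one]
  calc e * (s * e) ^ k = (e * (s * e) * e⁻¹) ^ k * e := by rw [conj_zpow, inv_mul_cancel_right]
    _ = (s * e) ^ (-k - 1) * s := by
      rw [hconj, inv_zpow', zpow_sub_one, mul_assoc, mul_inv_rev, hs', he', mul_assoc, hss,
        mul_one]

variable {x : α}

theorem right_apply_zpow_smul (he : Involutive e) (hs : Involutive s) (hx : s x = x) (k : ℤ) :
    e ((s * e) ^ k • x) = (s * e) ^ (-k - 1) • x := by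
  rw [Perm.smul_def, ← Perm.mul_apply, mul_zpow_mul_eq he hs, Perm.mul_apply, hx, Perm.smul_def]

theorem left_apply_zpow_smul (he : Involutive e) (hs : Involutive s) (hx : s x = x) (k : ℤ) :
    s ((s * e) ^ k • x) = (s * e) ^ (-k) • x := by
  rw [← he ((s * e) ^ k • x), right_apply_zpow_smul he hs hx, ← Perm.mul_apply, ← Perm.smul_def,
    smul_smul, ← zpow_one_add]
  congr 2
  ring

theorem sameCycle_of_eqvGen_circuitRel (he : Involutive e) (hs : Involutive s) (hx : s x = x)
    {y : α} (h : EqvGen (circuitRel e s) x y) : (s * e).SameCycle x y := by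
  have hclosed : ∀ z, (s * e).SameCycle x z →
      (s * e).SameCycle x (e z) ∧ (s * e).SameCycle x (s z) := by
    rintro _ ⟨k, rfl⟩
    exact ⟨⟨-k - 1, (right_apply_zpow_smul he hs hx k).symm⟩,
      ⟨-k, (left_apply_zpow_smul he hs hx k).symm⟩⟩
  have hiff : ∀ z w, EqvGen (circuitRel e s) z w →
      ((s * e).SameCycle x z ↔ (s * e).SameCycle x w) := by
    intro z w hzw
    induction hzw with
    | rel z w hzw =>
      rcases hzw with rfl | rfl
      · exact ⟨fun h => (hclosed z h).1, fun h => he z ▸ (hclosed _ h).1⟩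
      · exact ⟨fun h => (hclosed z h).2, fun h => hs z ▸ (hclosed _ h).2⟩
    | refl => exact Iff.rfl
    | symm _ _ _ ih => exact ih.symm
    | trans _ _ _ _ _ ih₁ ih₂ => exact ih₁.trans ih₂
  exact (hiff x y h).1 (Perm.SameCycle.refl _ _)

theorem even_period_mul (he : Involutive e) (hs : Involutive s) (hfp : ∀ a, e a ≠ a)
    (hx : s x = x) : Even (period (s * e) x) := by
  by_contra hodd
  obtain ⟨m, hm⟩ := Nat.not_even_iff_odd.mp hodd
  apply hfp ((s * e) ^ (m : ℤ) • x)
  rw [right_apply_zpow_smul he hs hx, ← zpow_add_period_smul, hm]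
  congr 2
  push_cast
  ring

theorem period_mul_pos [Finite α] : 0 < period (s * e) x :=
  period_pos_of_orderOf_pos (orderOf_pos _) x

/-- For a fixed point `x` of `s`, the other fixed point of `s` in the class of `x`: the antipode
of `x` on its `s * e`-cycle. -/
noncomputable def partner (e s : Perm α) (x : α) : α :=
  (s * e) ^ (period (s * e) x / 2) • x

theorem partner_ne [Finite α] (he : Involutive e) (hs : Involutive s) (hfp : ∀ a, e a ≠ a)
    (hx : s x = x) : partner e s x ≠ x := by
  obtain ⟨m, hm⟩ := even_period_mul he hs hfp hx
  have hpos : 0 < period (s * e) x := period_mul_pos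
  rw [partner, Ne, pow_smul_eq_iff_period_dvd]
  intro hdvd
  have := Nat.le_of_dvd (by omega) hdvd
  omega

theorem apply_partner [Finite α] (he : Involutive e) (hs : Involutive s) (hfp : ∀ a, e a ≠ a)
    (hx : s x = x) : s (partner e s x) = partner e s x := by
  obtain ⟨m, hm⟩ := even_period_mul he hs hfp hx
  rw [partner, ← zpow_natCast, left_apply_zpow_smul he hs hx, ← zpow_add_period_smul, hm]
  congr 2
  omega

theorem eqvGen_partner [Finite α] : EqvGen (circuitRel e s) x (partner e s x) :=
  eqvGen_circuitRel_of_sameCycle ⟨(period (s * e) x / 2 : ℕ), by rw [zpow_natCast]; rfl⟩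

theorem eq_or_eq_partner_of_eqvGen [Finite α] (he : Involutive e) (hs : Involutive s)
    (hfp : ∀ a, e a ≠ a) (hx : s x = x) {y : α} (hy : s y = y)
    (h : EqvGen (circuitRel e s) x y) : y = x ∨ y = partner e s x := by
  obtain ⟨m, hm⟩ := even_period_mul he hs hfp hx
  have hpos : 0 < period (s * e) x := period_mul_pos
  obtain ⟨k, rfl⟩ := sameCycle_of_eqvGen_circuitRel he hs hx h
  change s ((s * e) ^ k • x) = (s * e) ^ k • x at hy
  change (s * e) ^ k • x = x ∨ (s * e) ^ k • x = partner e s x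
  rw [← zpow_mod_period_smul k] at hy ⊢
  set j := k % (period (s * e) x : ℤ)
  have hj0 : 0 ≤ j := Int.emod_nonneg _ (by omega)
  have hjn : j < period (s * e) x := Int.emod_lt_of_pos _ (by omega)
  -- `s` fixes `(s * e) ^ j • x` iff the period divides `2 j`, so `j` is `0` or half the period
  rw [left_apply_zpow_smul he hs hx, eq_comm, ← inv_smul_eq_iff, ← mul_smul, ← zpow_neg,
    ← zpow_add, zpow_smul_eq_iff_period_dvd, hm] at hy
  obtain ⟨t, ht⟩ := hy
  rw [hm] at hjn hpos
  push_cast at ht hjn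
  have hm0 : (0 : ℤ) < m := by omega
  have ht0 : 0 ≤ t := by nlinarith
  have ht1 : t < 2 := by nlinarith
  interval_cases t
  · left; rw [show j = 0 by omega, zpow_zero, one_smul]
  · right; rw [partner, hm, show j = (m : ℤ) by omega, zpow_natCast]; congr 2; omega

theorem partner_partner [Finite α] (he : Involutive e) (hs : Involutive s) (hfp : ∀ a, e a ≠ a)
    (hx : s x = x) : partner e s (partner e s x) = x :=
  ((eq_or_eq_partner_of_eqvGen he hs hfp (apply_partner he hs hfp hx) hx
    (EqvGen.symm _ _ eqvGen_partner)).resolve_left (partner_ne he hs hfp hx).symm).symm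

end Involutions

section CardFour

variable {α : Type*} {S : Finset α}

theorem eq_or_eq_or_eq_or_eq_of_card_eq_four (hS : #S = 4) {a b c d x : α} (ha : a ∈ S)
    (hb : b ∈ S) (hc : c ∈ S) (hd : d ∈ S) (hab : a ≠ b) (hac : a ≠ c) (had : a ≠ d)
    (hbc : b ≠ c) (hbd : b ≠ d) (hcd : c ≠ d) (hx : x ∈ S) :
    x = a ∨ x = b ∨ x = c ∨ x = d := by
  classical
  have hsub : ({a, b, c, d} : Finset α) ⊆ S := by simp [insert_subset_iff, *]
  have hcard : #({a, b, c, d} : Finset α) = 4 :=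
    card_eq_four.mpr ⟨a, b, c, d, hab, hac, had, hbc, hbd, hcd, rfl⟩
  rw [← eq_of_subset_of_card_le hsub (by rw [hS, hcard])] at hx
  simpa using hx

theorem eqOn_of_card_eq_four (hS : #S = 4) {g h : α → α} (hgS : ∀ x ∈ S, g x ∈ S)
    (hhS : ∀ x ∈ S, h x ∈ S) (hg : ∀ x ∈ S, g (g x) = x) (hh : ∀ x ∈ S, h (h x) = x)
    (hg' : ∀ x ∈ S, g x ≠ x) (hh' : ∀ x ∈ S, h x ≠ x) {a : α} (ha : a ∈ S) (hgh : g a = h a) :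
    Set.EqOn g h S := by
  intro x hx
  by_cases hxa : x = a
  · rw [hxa, hgh]
  by_cases hxb : x = g a
  · rw [hxb, hg a ha, hgh, hh a ha]
  have hgxa : g x ≠ a := fun h' => hxb (by rw [← h', hg x hx])
  have hgxb : g x ≠ g a := fun h' => hxa (by rw [← hg x hx, h', hg a ha])
  rcases eq_or_eq_or_eq_or_eq_of_card_eq_four hS ha (hgS a ha) hx (hgS x hx) (hg' a ha).symm
    (Ne.symm hxa) hgxa.symm (Ne.symm hxb) hgxb.symm (hg' x hx).symm (hhS x hx) with
    h' | h' | h' | h'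
  · exact absurd (by rw [← hh x hx, h', ← hgh]) hxb
  · exact absurd (by rw [← hh x hx, h', hgh, hh a ha]) hxa
  · exact absurd h' (hh' x hx)
  · exact h'.symm

theorem exists_apply_eq_of_card_eq_four (hS : #S = 4) {g : Fin 3 → α → α}
    (hgS : ∀ i, ∀ x ∈ S, g i x ∈ S) (hg : ∀ i, ∀ x ∈ S, g i (g i x) = x)
    (hg' : ∀ i, ∀ x ∈ S, g i x ≠ x) (hdist : ∀ i j, Set.EqOn (g i) (g j) S → i = j) {a b : α}
    (ha : a ∈ S) (hb : b ∈ S) (hba : b ≠ a) : ∃ i₀, g i₀ a = b ∧ ∀ j ≠ i₀, g j a ≠ b := by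
  classical
  have hinj : ∀ i j, g i a = g j a → i = j := fun i j hij =>
    hdist i j (eqOn_of_card_eq_four hS (hgS i) (hgS j) (hg i) (hg j) (hg' i) (hg' j) ha hij)
  obtain ⟨i₀, -, hi₀⟩ := surj_on_of_inj_on_of_card_le (s := univ) (t := S.erase a)
    (fun i _ => g i a) (fun i _ => mem_erase.2 ⟨hg' i a ha, hgS i a ha⟩)
    (fun i j _ _ => hinj i j) (by simp [card_erase_of_mem ha, hS]) b (mem_erase.2 ⟨hba, hb⟩)
  exact ⟨i₀, hi₀.symm, fun j hj h => hj (hinj j i₀ (h.trans hi₀))⟩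

end CardFour

section SplitAt

variable {α : Type*} [DecidableEq α]

/-- `τ` with its transitions at `S` cut: the half-edges in `S` become loose ends. -/
def splitAt (S : Finset α) (τ : α → α) (x : α) : α :=
  if x ∈ S then x else τ x

variable {S : Finset α} {τ : α → α}

theorem splitAt_of_notMem {x : α} (hx : x ∉ S) : splitAt S τ x = τ x :=
  if_neg hx

theorem splitAt_eq_self_iff (hτ : ∀ x, τ x ≠ x) {x : α} : splitAt S τ x = x ↔ x ∈ S := by
  by_cases hx : x ∈ S <;> simp [splitAt, hx, hτ]

theorem involutive_splitAt (hτS : ∀ x ∈ S, τ x ∈ S) (hτ : Involutive τ) :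
    Involutive (splitAt S τ) := by
  intro x
  by_cases hx : x ∈ S
  · simp [splitAt, hx]
  · have hτx : τ x ∉ S := fun h => hx (hτ x ▸ hτS _ h)
    simp [splitAt, hx, hτx, hτ x]

end SplitAt

section Transitions

variable {α : Type*} {ε σ : Perm α} {S : Finset α} {τ : α → α}

theorem circuitRel_le_eqvGen (hσS : ∀ x, σ x = x ↔ x ∈ S) (hτ : ∀ x ∉ S, τ x = σ x) :
    circuitRel ε σ ≤ EqvGen (circuitRel ε τ) := by
  rintro x _ (rfl | rfl)
  · exact EqvGen.rel _ _ (Or.inl rfl)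
  · by_cases hx : x ∈ S
    · rw [(hσS x).2 hx]
      exact EqvGen.refl x
    · exact EqvGen.rel _ _ (Or.inr (hτ x hx))

variable [Finite α]

theorem partner_mem (hε : Involutive ε) (hσ : Involutive σ) (hεfp : ∀ x, ε x ≠ x)
    (hσS : ∀ x, σ x = x ↔ x ∈ S) {x : α} (hx : x ∈ S) : partner ε σ x ∈ S :=
  (hσS _).1 (apply_partner hε hσ hεfp ((hσS x).2 hx))

theorem eqvGen_or_eqvGen_of_card_eq_four (hε : Involutive ε) (hσ : Involutive σ)
    (hεfp : ∀ x, ε x ≠ x) (hσS : ∀ x, σ x = x ↔ x ∈ S) (hS : #S = 4) {a c x : α} (ha : a ∈ S)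
    (hc : c ∈ S) (hac : ¬ EqvGen (circuitRel ε σ) a c) (hx : x ∈ S) :
    EqvGen (circuitRel ε σ) a x ∨ EqvGen (circuitRel ε σ) c x := by
  have haa' : EqvGen (circuitRel ε σ) a (partner ε σ a) := eqvGen_partner
  have hcc' : EqvGen (circuitRel ε σ) c (partner ε σ c) := eqvGen_partner
  have h₁ : a ≠ c := by rintro rfl; exact hac (EqvGen.refl a)
  have h₂ : a ≠ partner ε σ c := by rintro rfl; exact hac (EqvGen.symm _ _ hcc')
  have h₃ : partner ε σ a ≠ c := by rintro rfl; exact hac haa'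
  have h₄ : partner ε σ a ≠ partner ε σ c := fun h =>
    hac (haa'.trans _ _ _ (h ▸ EqvGen.symm _ _ hcc'))
  rcases eq_or_eq_or_eq_or_eq_of_card_eq_four hS ha
    (partner_mem hε hσ hεfp hσS ha) hc (partner_mem hε hσ hεfp hσS hc)
    (partner_ne hε hσ hεfp ((hσS a).2 ha)).symm h₁ h₂ h₃ h₄
    (partner_ne hε hσ hεfp ((hσS c).2 hc)).symm hx with rfl | rfl | rfl | rfl
  · exact Or.inl (EqvGen.refl _)
  · exact Or.inl haa'
  · exact Or.inr (EqvGen.refl _)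
  · exact Or.inr hcc'

theorem circuitCount_eq_of_apply_eq_partner (hε : Involutive ε) (hσ : Involutive σ)
    (hεfp : ∀ x, ε x ≠ x) (hσS : ∀ x, σ x = x ↔ x ∈ S) (hS : #S = 4)
    (hτS : ∀ x ∈ S, τ x ∈ S) (hτ : ∀ x ∈ S, τ (τ x) = x) (hτfp : ∀ x ∈ S, τ x ≠ x)
    (hτσ : ∀ x ∉ S, τ x = σ x) {a : α} (ha : a ∈ S) (hτa : τ a = partner ε σ a) :
    circuitCount ε τ = circuitCount ε σ := by
  have hfix : ∀ x ∈ S, σ x = x := fun x hx => (hσS x).2 hx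
  have hτ_eq : Set.EqOn τ (partner ε σ) S :=
    eqOn_of_card_eq_four hS hτS (fun x hx => partner_mem hε hσ hεfp hσS hx) hτ
      (fun x hx => partner_partner hε hσ hεfp (hfix x hx)) hτfp
      (fun x hx => partner_ne hε hσ hεfp (hfix x hx)) ha hτa
  refine card_quot_eq_of_le_eqvGen ?_ (circuitRel_le_eqvGen hσS hτσ)
  rintro x _ (rfl | rfl)
  · exact EqvGen.rel _ _ (Or.inl rfl)
  · by_cases hx : x ∈ S
    · rw [hτ_eq hx]
      exact eqvGen_partner
    · exact EqvGen.rel _ _ (Or.inr (hτσ x hx).symm)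

theorem circuitCount_add_one_of_apply_ne_partner (hε : Involutive ε) (hσ : Involutive σ)
    (hεfp : ∀ x, ε x ≠ x) (hσS : ∀ x, σ x = x ↔ x ∈ S) (hS : #S = 4)
    (hτS : ∀ x ∈ S, τ x ∈ S) (hτσ : ∀ x ∉ S, τ x = σ x) {a : α} (ha : a ∈ S)
    (hτa : τ a ≠ a) (hτa' : τ a ≠ partner ε σ a) :
    circuitCount ε τ + 1 = circuitCount ε σ := by
  have hsplit : ¬ EqvGen (circuitRel ε σ) a (τ a) := fun h =>
    (eq_or_eq_partner_of_eqvGen hε hσ hεfp ((hσS a).2 ha) ((hσS _).2 (hτS a ha)) h).elim hτa hτa'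
  refine card_quot_add_one_of_merge (circuitRel_le_eqvGen hσS hτσ) ?_ hsplit
    (EqvGen.rel _ _ (Or.inr rfl))
  rintro x _ (rfl | rfl)
  · exact Or.inl (EqvGen.rel _ _ (Or.inl rfl))
  · by_cases hx : x ∈ S
    · exact Or.inr ⟨eqvGen_or_eqvGen_of_card_eq_four hε hσ hεfp hσS hS ha (hτS a ha) hsplit hx,
        eqvGen_or_eqvGen_of_card_eq_four hε hσ hεfp hσS hS ha (hτS a ha) hsplit (hτS x hx)⟩
    · exact Or.inl (EqvGen.rel _ _ (Or.inr (hτσ x hx).symm))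

end Transitions

theorem exists_multiset_eq_of_add_one_eq (g : Fin 3 → ℕ) {i₀ : Fin 3} {K : ℕ} (h₀ : g i₀ = K)
    (h : ∀ j ≠ i₀, g j + 1 = K) : ∃ k, ({g 0, g 1, g 2} : Multiset ℕ) = {k, k, k + 1} := by
  obtain _ | k := K
  · exact absurd (h (i₀ + 1) (by simp)) (Nat.succ_ne_zero _)
  have h' : ∀ j ≠ i₀, g j = k := fun j hj => Nat.succ_injective (h j hj)
  refine ⟨k, ?_⟩
  obtain rfl | rfl | rfl : i₀ = 0 ∨ i₀ = 1 ∨ i₀ = 2 := by omega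
  · rw [h₀, h' 1 (by decide), h' 2 (by decide), Multiset.insert_eq_cons, Multiset.insert_eq_cons,
      Multiset.cons_swap]
    exact congrArg _ (Multiset.pair_comm _ _)
  · rw [h₀, h' 0 (by decide), h' 2 (by decide)]
    exact congrArg _ (Multiset.pair_comm _ _)
  · rw [h₀, h' 0 (by decide), h' 1 (by decide)]

/-- `τ 0`, `τ 1`, `τ 2` are the three pairwise distinct transition systems agreeing outside `v`;
as there are exactly three fixed-point-free involutions of the four half-edges at `v`, they
realize all three choices. -/
theorem circuitCount_three_transitions_general {D V : Type*} [Fintype D]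
    [DecidableEq V]
    (ε : D → D) (hεinv : ∀ d, ε (ε d) = d) (hεfpf : ∀ d, ε d ≠ d)
    (π : D → V) (hdeg : ∀ w : V, Fintype.card {d : D // π d = w} = 4)
    (v : V) (τ : Fin 3 → D → D)
    (hinv : ∀ i d, τ i (τ i d) = d) (hfpf : ∀ i d, τ i d ≠ d)
    (hvert : ∀ i d, π (τ i d) = π d)
    (hagree : ∀ i j d, π d ≠ v → τ i d = τ j d)
    (hdist : ∀ i j, i ≠ j → τ i ≠ τ j) :
    ∃ k : ℕ,
      ({circuitCount ε (τ 0), circuitCount ε (τ 1), circuitCount ε (τ 2)} :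
        Multiset ℕ) = {k, k, k + 1} := by
  classical
  set S : Finset D := univ.filter (π · = v) with hSdef
  have hS : #S = 4 := by rw [← hdeg v, Fintype.card_subtype]
  have hmemS : ∀ d, d ∈ S ↔ π d = v := by simp [hSdef]
  have hτS : ∀ i, ∀ x ∈ S, τ i x ∈ S := fun i x hx => by rw [hmemS, hvert, ← hmemS]; exact hx
  have hσ : Involutive (splitAt S (τ 0)) := involutive_splitAt (hτS 0) (hinv 0)
  set σ := hσ.toPerm _
  set ε' := Involutive.toPerm ε hεinv
  have hσS : ∀ d, σ d = d ↔ d ∈ S := fun d => splitAt_eq_self_iff (hfpf 0)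
  have hτσ : ∀ i, ∀ d ∉ S, τ i d = σ d := fun i d hd =>
    (hagree i 0 d ((hmemS d).not.1 hd)).trans (splitAt_of_notMem hd).symm
  have hdist' : ∀ i j, Set.EqOn (τ i) (τ j) S → i = j := fun i j h => by_contra fun hne =>
    hdist i j hne <| funext fun d =>
      if hd : d ∈ S then h hd else (hτσ i d hd).trans (hτσ j d hd).symm
  obtain ⟨a, ha⟩ : S.Nonempty := card_pos.mp (by omega)
  obtain ⟨i₀, hi₀, hne⟩ := exists_apply_eq_of_card_eq_four hS hτS (fun i x _ => hinv i x)
    (fun i x _ => hfpf i x) hdist' ha (partner_mem (ε := ε') hεinv hσ hεfpf hσS ha)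
    (partner_ne hεinv hσ hεfpf ((hσS a).2 ha))
  exact exists_multiset_eq_of_add_one_eq (fun i => circuitCount ε (τ i))
    (circuitCount_eq_of_apply_eq_partner (ε := ε') hεinv hσ hεfpf hσS hS (hτS i₀)
      (fun x _ => hinv i₀ x) (fun x _ => hfpf i₀ x) (hτσ i₀) ha hi₀)
    fun j hj => circuitCount_add_one_of_apply_ne_partner (ε := ε') hεinv hσ hεfpf hσS hS (hτS j)
      (hτσ j) ha (hfpf j a) (hne j hj)

/-- Let `G` be a connected 4-regular multigraph, `P` a circuit partition of `G`
and `v` a vertex. Among the three circuit partitions obtained by choosing one of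
the three possible transitions at `v` (keeping the transitions of `P` at all
other vertices), two have equal cardinality `k` and the third has cardinality
`k + 1`. (Here `τ 0`, `τ 1`, `τ 2` are the three pairwise distinct transition
systems agreeing outside `v`; since there are exactly three fixed-point-free
involutions of the four half-edges at `v`, they realize all three choices.) -/
theorem circuitCount_three_transitions {D V : Type*} [Fintype D] [DecidableEq D]
    [Fintype V] [DecidableEq V]
    (ε : D → D) (hεinv : ∀ d, ε (ε d) = d) (hεfpf : ∀ d, ε d ≠ d)
    (π : D → V) (hdeg : ∀ w : V, Fintype.card {d : D // π d = w} = 4)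
    (hconn : ∀ d d' : D, Relation.EqvGen (fun a b => ε a = b ∨ π a = π b) d d')
    (v : V) (τ : Fin 3 → D → D)
    (hinv : ∀ i d, τ i (τ i d) = d) (hfpf : ∀ i d, τ i d ≠ d)
    (hvert : ∀ i d, π (τ i d) = π d)
    (hagree : ∀ i j d, π d ≠ v → τ i d = τ j d)
    (hdist : ∀ i j, i ≠ j → τ i ≠ τ j) :
    ∃ k : ℕ,
      ({circuitCount ε (τ 0), circuitCount ε (τ 1), circuitCount ε (τ 2)} :
        Multiset ℕ) = {k, k, k + 1} :=
  circuitCount_three_transitions_general ε hεinv hεfpf π hdeg v τ hinv hfpf hvert hagree hdist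
end
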